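/- arXiv:1204.2967 — 2 statements merged into one kernel-verified Lean document; each statement's English description precedes it below -/
import Mathlib

section
/- Let A = B^T ∈ M_n(ℤ) be invertible and let Λ ⊇ ℤ^n be a full rank lattice. Then the following two conditions are equivalent: (i) Bℤ^n ∩ Λ* ⊆ BΛ* and BΛ* ⊆ Λ*; (ii) B^j ℤ^n ∩ Λ* = B^j Λ* for all integers j ≥ 0. -/
open Matrix

/-- Integer points `ℤⁿ ⊆ ℝⁿ`. -/
def intPts (n : ℕ) : Set (Fin n → ℝ) := {x | ∀ i, ∃ k : ℤ, x i = (k : ℝ)}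

/-- Full rank lattice in `ℝⁿ`. -/
def IsFullLattice {n : ℕ} (L : AddSubgroup (Fin n → ℝ)) : Prop :=
  ∃ b : Module.Basis (Fin n) ℝ (Fin n → ℝ), L = AddSubgroup.closure (Set.range b)

/-- The dual lattice of a set, with respect to the dot product. -/
def dualSet {n : ℕ} (S : Set (Fin n → ℝ)) : Set (Fin n → ℝ) :=
  {x | ∀ g ∈ S, ∃ k : ℤ, x ⬝ᵥ g = (k : ℝ)}

/-!
Only three facts enter: `x ↦ Bx` is injective and maps `ℤⁿ` into itself, and `Λ* ⊆ ℤⁿ`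
(pair with the standard basis vectors, which lie in `Λ`). So let `f` be any injective self-map of
a set `Z` and `D ⊆ Z`. Given (i), induction on `j` gives
`fʲ⁺¹ Z ∩ D ⊆ fʲ (f Z) ∩ (fʲ Z ∩ D) = fʲ (f Z) ∩ fʲ D = fʲ (f Z ∩ D) ⊆ fʲ (f D)`,
the middle equality by injectivity of `fʲ`; conversely, (ii) at `j = 1` reads `f Z ∩ D = f D`,
which contains both halves of (i).
-/

namespace Set

variable {α : Type*} {f : α → α} {Z D : Set α}

theorem image_iterate_inter_eq_iff (hf : f.Injective) (hZ : MapsTo f Z Z) (hDZ : D ⊆ Z) :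
    (f '' Z ∩ D ⊆ f '' D ∧ f '' D ⊆ D) ↔ ∀ j : ℕ, f^[j] '' Z ∩ D = f^[j] '' D := by
  constructor
  · rintro ⟨h, hD⟩ j
    rw [← mapsTo_iff_image_subset] at hD
    refine (subset_inter (image_mono hDZ) (hD.iterate j).image_subset).antisymm' ?_
    induction j with
    | zero => simp [inter_eq_right.mpr hDZ]
    | succ j ih =>
      calc f^[j + 1] '' Z ∩ D
          = f^[j] '' (f '' Z) ∩ (f^[j] '' Z ∩ D) := by
            rw [Function.iterate_succ, image_comp, ← inter_assoc,
              inter_eq_left.mpr (image_mono hZ.image_subset)]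
        _ ⊆ f^[j] '' (f '' Z) ∩ f^[j] '' D := inter_subset_inter_right _ ih
        _ = f^[j] '' (f '' Z ∩ D) := (image_inter (hf.iterate j)).symm
        _ ⊆ f^[j] '' (f '' D) := image_mono h
        _ = f^[j + 1] '' D := by rw [Function.iterate_succ, image_comp]
  · intro h
    have h₁ : f '' Z ∩ D = f '' D := by simpa using h 1
    exact ⟨h₁.subset, h₁ ▸ inter_subset_right⟩

end Set

theorem mulVec_pow_eq_iterate {n : Type*} [Fintype n] [DecidableEq n] {R : Type*} [Semiring R]
    (M : Matrix n n R) (j : ℕ) : (M ^ j).mulVec = M.mulVec^[j] := by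
  induction j with
  | zero => funext v; simp
  | succ j ih => funext v; rw [pow_succ, ← mulVec_mulVec, ih, Function.iterate_succ_apply]

theorem mapsTo_mulVec_intPts {n : ℕ} (B : Matrix (Fin n) (Fin n) ℤ) :
    Set.MapsTo (B.map (Int.cast : ℤ → ℝ)).mulVec (intPts n) (intPts n) := by
  intro x hx i
  choose k hk using hx
  obtain rfl : x = Int.cast ∘ k := funext hk
  exact ⟨(B *ᵥ k) i, (RingHom.map_mulVec (Int.castRingHom ℝ) B k i).symm⟩

theorem dualSet_anti {n : ℕ} {S T : Set (Fin n → ℝ)} (h : S ⊆ T) : dualSet T ⊆ dualSet S :=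
  fun _ hx g hg => hx g (h hg)

theorem dualSet_intPts_subset (n : ℕ) : dualSet (intPts n) ⊆ intPts n := by
  intro _ hx i
  have hi : (Pi.single i 1 : Fin n → ℝ) ∈ intPts n := fun j => by
    rcases eq_or_ne j i with rfl | h
    · exact ⟨1, by simp⟩
    · exact ⟨0, by simp [h]⟩
  simpa using hx _ hi

theorem stmt11_general {n : ℕ} (B : Matrix (Fin n) (Fin n) ℤ)
    (hB : IsUnit ((B.map (Int.cast : ℤ → ℝ)).det))
    (Λ : AddSubgroup (Fin n → ℝ))
    (hZΛ : intPts n ⊆ (Λ : Set (Fin n → ℝ))) :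
    -- (i)
    ((B.map (Int.cast : ℤ → ℝ)).mulVec '' intPts n ∩ dualSet (Λ : Set (Fin n → ℝ)) ⊆
        (B.map (Int.cast : ℤ → ℝ)).mulVec '' dualSet (Λ : Set (Fin n → ℝ)) ∧
      (B.map (Int.cast : ℤ → ℝ)).mulVec '' dualSet (Λ : Set (Fin n → ℝ)) ⊆
        dualSet (Λ : Set (Fin n → ℝ))) ↔
    -- (ii)
    (∀ j : ℕ, ((B.map (Int.cast : ℤ → ℝ)) ^ j).mulVec '' intPts n ∩
        dualSet (Λ : Set (Fin n → ℝ)) =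
      ((B.map (Int.cast : ℤ → ℝ)) ^ j).mulVec '' dualSet (Λ : Set (Fin n → ℝ))) := by
  simp only [mulVec_pow_eq_iterate]
  exact Set.image_iterate_inter_eq_iff
    (mulVec_injective_iff_isUnit.mpr ((isUnit_iff_isUnit_det _).mpr hB))
    (mapsTo_mulVec_intPts B) ((dualSet_anti hZΛ).trans (dualSet_intPts_subset n))

/-- equivalence of conditions (i) and (ii) of Proposition 3.6. -/
theorem stmt11 {n : ℕ} (B : Matrix (Fin n) (Fin n) ℤ)
    (hB : IsUnit ((B.map (Int.cast : ℤ → ℝ)).det))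
    (Λ : AddSubgroup (Fin n → ℝ)) (hΛ : IsFullLattice Λ)
    (hZΛ : intPts n ⊆ (Λ : Set (Fin n → ℝ))) :
    -- (i)
    ((B.map (Int.cast : ℤ → ℝ)).mulVec '' intPts n ∩ dualSet (Λ : Set (Fin n → ℝ)) ⊆
        (B.map (Int.cast : ℤ → ℝ)).mulVec '' dualSet (Λ : Set (Fin n → ℝ)) ∧
      (B.map (Int.cast : ℤ → ℝ)).mulVec '' dualSet (Λ : Set (Fin n → ℝ)) ⊆
        dualSet (Λ : Set (Fin n → ℝ))) ↔
    -- (ii)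
    (∀ j : ℕ, ((B.map (Int.cast : ℤ → ℝ)) ^ j).mulVec '' intPts n ∩
        dualSet (Λ : Set (Fin n → ℝ)) =
      ((B.map (Int.cast : ℤ → ℝ)) ^ j).mulVec '' dualSet (Λ : Set (Fin n → ℝ))) :=
  stmt11_general B hB Λ hZΛ
end

section
/- Let A = B^T ∈ M_n(ℤ) be invertible and Λ ⊇ ℤ^n a full rank lattice. Then the condition (v) [B^j ℤ^n ∩ Λ* ⊆ B^j Λ* for all j ∈ ℤ] is equivalent to the condition (vi) [(Σ_{j∈ℤ} B^j Λ*) ∩ ℤ^n ⊆ Λ*], where Σ_{j∈ℤ} B^j Λ* denotes the subgroup of all finite sums of elements from the groups B^j Λ*. -/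
open Matrix

/-!
Write `g` for the action of `B`, `D = Λ*` and `Z = ℤⁿ`; then `D ⊆ Z` and `g Z ⊆ Z`.
Condition (v) at `j = -1` says exactly that `g D ⊆ D`, so the subgroups `g^j D` decrease in `j`
and their sum is their directed union. An integer point `x` of the sum then lies in some `g^j D`,
and (v) at `-j` applied to `g^(-j) x` puts `x` back into `D`. Conversely, for `x ∈ g^j Z ∩ D` the
point `g^(-j) x` is integral and lies in the sum, so (vi) puts it into `D`.
-/

open Pointwise

section GroupAction

variable {Γ V : Type*} [Group Γ] [AddGroup V] [DistribMulAction Γ V]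
  {g : Γ} {D : AddSubgroup V} {Z : Set V}

theorem smul_le_of_forall_zpow_smul_inter_subset (hDZ : (D : Set V) ⊆ Z)
    (hgZ : ∀ z ∈ Z, g • z ∈ Z) (h : ∀ j : ℤ, g ^ j • Z ∩ D ⊆ g ^ j • (D : Set V)) :
    g • D ≤ D := by
  rw [AddSubgroup.pointwise_smul_le_iff, ← SetLike.coe_subset_coe,
    AddSubgroup.coe_pointwise_smul]
  intro x hx
  have hinv := h (-1)
  rw [_root_.zpow_neg_one] at hinv
  exact hinv ⟨Set.mem_inv_smul_set_iff.mpr (hgZ x (hDZ hx)), hx⟩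

theorem antitone_zpow_smul (hgD : g • D ≤ D) : Antitone fun j : ℤ => g ^ j • D :=
  antitone_int_of_succ_le fun j => by
    rw [_root_.zpow_add_one, mul_smul]
    exact AddSubgroup.pointwise_smul_le_pointwise_smul_iff.mpr hgD

theorem exists_mem_zpow_smul_of_mem_closure (hgD : g • D ≤ D) {x : V}
    (hx : x ∈ AddSubgroup.closure (⋃ j : ℤ, g ^ j • (D : Set V))) :
    ∃ j : ℤ, x ∈ g ^ j • D := by
  have hsup : AddSubgroup.closure (⋃ j : ℤ, g ^ j • (D : Set V)) = ⨆ j : ℤ, g ^ j • D := by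
    simp only [AddSubgroup.closure_iUnion, ← AddSubgroup.coe_pointwise_smul,
      AddSubgroup.closure_eq]
  rw [hsup] at hx
  exact (AddSubgroup.mem_iSup_of_directed (antitone_zpow_smul hgD).directed_le).mp hx

theorem forall_zpow_smul_inter_subset_iff (hDZ : (D : Set V) ⊆ Z)
    (hgZ : ∀ z ∈ Z, g • z ∈ Z) :
    (∀ j : ℤ, g ^ j • Z ∩ D ⊆ g ^ j • (D : Set V)) ↔
      (AddSubgroup.closure (⋃ j : ℤ, g ^ j • (D : Set V)) : Set V) ∩ Z ⊆ D := by
  constructor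
  · rintro h x ⟨hx, hxZ⟩
    obtain ⟨j, hxj⟩ :=
      exists_mem_zpow_smul_of_mem_closure (smul_le_of_forall_zpow_smul_inter_subset hDZ hgZ h) hx
    have hy : g ^ (-j) • x ∈ g ^ (-j) • Z ∩ D := by
      refine ⟨Set.smul_mem_smul_set hxZ, ?_⟩
      rw [_root_.zpow_neg]
      exact AddSubgroup.mem_pointwise_smul_iff_inv_smul_mem.mp hxj
    exact Set.smul_mem_smul_set_iff.mp (h (-j) hy)
  · rintro h j x ⟨hxZ, hx⟩
    have hy : (g ^ j)⁻¹ • x ∈ AddSubgroup.closure (⋃ j : ℤ, g ^ j • (D : Set V)) := by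
      refine AddSubgroup.subset_closure (Set.mem_iUnion.mpr ⟨-j, ?_⟩)
      rw [_root_.zpow_neg]
      exact Set.smul_mem_smul_set hx
    exact Set.mem_smul_set_iff_inv_smul_mem.mpr
      (h ⟨hy, Set.mem_smul_set_iff_inv_smul_mem.mp hxZ⟩)

end GroupAction

theorem Matrix.GeneralLinearGroup.image_mulVec_zpow {ι R : Type*} [Fintype ι] [DecidableEq ι]
    [CommRing R] (u : GL ι R) (j : ℤ) (S : Set (ι → R)) :
    ((u : Matrix ι ι R) ^ j).mulVec '' S = toLin u ^ j • S := by
  rw [← Set.image_smul, ← map_zpow, ← coe_units_zpow]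
  rfl

def dualAddSubgroup {n : ℕ} (S : Set (Fin n → ℝ)) : AddSubgroup (Fin n → ℝ) where
  carrier := dualSet S
  zero_mem' _ _ := ⟨0, by simp⟩
  add_mem' ha hb g hg := by
    obtain ⟨k₁, h₁⟩ := ha g hg
    obtain ⟨k₂, h₂⟩ := hb g hg
    exact ⟨k₁ + k₂, by rw [add_dotProduct, h₁, h₂]; push_cast; ring⟩
  neg_mem' ha g hg := by
    obtain ⟨k, h⟩ := ha g hg
    exact ⟨-k, by rw [neg_dotProduct, h]; push_cast; ring⟩

theorem single_one_mem_intPts {n : ℕ} (i : Fin n) : Pi.single i (1 : ℝ) ∈ intPts n := by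
  intro i'
  by_cases h : i' = i
  · exact ⟨1, by simp [h]⟩
  · exact ⟨0, by simp [h]⟩

theorem dualSet_subset_intPts {n : ℕ} {S : Set (Fin n → ℝ)} (hS : intPts n ⊆ S) :
    dualSet S ⊆ intPts n := by
  intro x hx i
  obtain ⟨k, hk⟩ := hx _ (hS (single_one_mem_intPts i))
  exact ⟨k, by rwa [dotProduct_single, mul_one] at hk⟩

theorem mulVec_mem_intPts {m n : ℕ} (C : Matrix (Fin m) (Fin n) ℤ) {x : Fin n → ℝ}
    (hx : x ∈ intPts n) : (C.map (Int.cast : ℤ → ℝ)).mulVec x ∈ intPts m := by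
  choose v hv using hx
  obtain rfl : x = (Int.castRingHom ℝ) ∘ v := funext hv
  exact fun i => ⟨(C *ᵥ v) i, ((Int.castRingHom ℝ).map_mulVec C v i).symm⟩

theorem stmt13_general {n : ℕ} (B : Matrix (Fin n) (Fin n) ℤ)
    (hB : IsUnit ((B.map (Int.cast : ℤ → ℝ)).det))
    (Λ : AddSubgroup (Fin n → ℝ))
    (hZΛ : intPts n ⊆ (Λ : Set (Fin n → ℝ))) :
    -- (v)
    (∀ j : ℤ, ((B.map (Int.cast : ℤ → ℝ)) ^ j).mulVec '' intPts n ∩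
        dualSet (Λ : Set (Fin n → ℝ)) ⊆
      ((B.map (Int.cast : ℤ → ℝ)) ^ j).mulVec '' dualSet (Λ : Set (Fin n → ℝ))) ↔
    -- (vi)
    ((AddSubgroup.closure
        (⋃ j : ℤ, ((B.map (Int.cast : ℤ → ℝ)) ^ j).mulVec ''
          dualSet (Λ : Set (Fin n → ℝ))) : AddSubgroup (Fin n → ℝ)) : Set (Fin n → ℝ)) ∩
        intPts n ⊆ dualSet (Λ : Set (Fin n → ℝ)) := by
  obtain ⟨u, hu⟩ := (isUnit_iff_isUnit_det _).mpr hB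
  have hgZ : ∀ z ∈ intPts n, GeneralLinearGroup.toLin u • z ∈ intPts n := fun z hz => by
    change (u : Matrix (Fin n) (Fin n) ℝ).mulVec z ∈ intPts n
    exact hu ▸ mulVec_mem_intPts B hz
  simp only [← hu, GeneralLinearGroup.image_mulVec_zpow]
  exact forall_zpow_smul_inter_subset_iff (D := dualAddSubgroup Λ)
    (dualSet_subset_intPts hZΛ) hgZ

/-- equivalence of conditions (v) and (vi) of Proposition 3.6. -/
theorem stmt13 {n : ℕ} (B : Matrix (Fin n) (Fin n) ℤ)
    (hB : IsUnit ((B.map (Int.cast : ℤ → ℝ)).det))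
    (Λ : AddSubgroup (Fin n → ℝ)) (hΛ : IsFullLattice Λ)
    (hZΛ : intPts n ⊆ (Λ : Set (Fin n → ℝ))) :
    -- (v)
    (∀ j : ℤ, ((B.map (Int.cast : ℤ → ℝ)) ^ j).mulVec '' intPts n ∩
        dualSet (Λ : Set (Fin n → ℝ)) ⊆
      ((B.map (Int.cast : ℤ → ℝ)) ^ j).mulVec '' dualSet (Λ : Set (Fin n → ℝ))) ↔
    -- (vi)
    ((AddSubgroup.closure
        (⋃ j : ℤ, ((B.map (Int.cast : ℤ → ℝ)) ^ j).mulVec ''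
          dualSet (Λ : Set (Fin n → ℝ))) : AddSubgroup (Fin n → ℝ)) : Set (Fin n → ℝ)) ∩
        intPts n ⊆ dualSet (Λ : Set (Fin n → ℝ)) :=
  stmt13_general B hB Λ hZΛ
end
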